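/- Let D_m = 4πe^γ (γ the Euler–Mascheroni constant). Assume that for all but finitely many number fields K one has |Δ_K|^{1/[K:ℚ]} ≥ D_m - ε for every ε > 0 (Odlyzko's bound), and assume that for a fixed s = σ + iτ with σ < 0 the inequality Γ_m(s) · D_m^{1/2 - σ} / ζ(1-σ) > 1 holds. Then for every B > 0 the set of isomorphism classes of number fields K with |ζ_K(s)| ≤ B is finite. -/

import Mathlib

open NumberField

/-- Number fields realized as finite-dimensional intermediate fields of `ℂ/ℚ`
(every isomorphism class of number fields arises this way, each finitely often). -/
abbrev NumberFieldIn : Type := {F : IntermediateField ℚ ℂ // FiniteDimensional ℚ F}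

noncomputable instance (F : NumberFieldIn) : NumberField F.1 := by
  haveI := F.2
  exact ⟨⟩

/-- `Γ_ℝ(s) = π^{-s/2} Γ(s/2)`. -/
noncomputable def GammaR (s : ℂ) : ℂ := (Real.pi : ℂ) ^ (-s / 2) * Complex.Gamma (s / 2)

/-- `Γ_ℂ(s) = 2 (2π)^{-s} Γ(s)`. -/
noncomputable def GammaC (s : ℂ) : ℂ := 2 * (2 * Real.pi : ℂ) ^ (-s) * Complex.Gamma s

/-- `Γ_m(s) = min {|Γ_ℝ(1-s)/Γ_ℝ(s)|, |Γ_ℂ(1-s)/Γ_ℂ(s)|^{1/2}}`. -/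
noncomputable def GammaMin (s : ℂ) : ℝ :=
  min ‖GammaR (1 - s) / GammaR s‖
    (Real.sqrt ‖GammaC (1 - s) / GammaC s‖)

/-- The Riemann zeta function at a real argument, as a real series. -/
noncomputable def riemannZetaReal (σ : ℝ) : ℝ :=
  ∑' n : ℕ, ((n : ℝ) + 1) ^ (-σ)

/-- The Odlyzko constant `D_m = 4πe^γ`. -/
noncomputable def Dm : ℝ := 4 * Real.pi * Real.exp Real.eulerMascheroniConstant

/-!
By the functional equation, `|ζ_K(s)| = |ζ_K(1-s)| · |Γ-factor| · |Δ_K|^{1/2-σ}`. Since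
`r₁ + 2 r₂ = n`, the Gamma factor is at least `Γ_m(s)^n`, and with the lower bound on
`|ζ_K(1-s)|` this gives `|ζ_K(s)| ≥ a^n |Δ_K|^p` with `a = Γ_m(s)/ζ(1-σ)`, `p = 1/2 - σ > 0`.
The hypothesis says `a D_m^p > 1`, hence `a D^p > 1` for some `D < D_m`. Off the finitely many
fields with `|Δ_K|^{1/n} < D`, we get `|ζ_K(s)| ≥ (a D^p)^n`, so `|ζ_K(s)| ≤ B` bounds the degree
`n`, and then `|Δ_K|`; Minkowski's finiteness finishes the proof.
-/

open Filter Topology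

lemma Dm_pos : 0 < Dm := by
  unfold Dm
  positivity

lemma GammaMin_nonneg (s : ℂ) : 0 ≤ GammaMin s :=
  le_min (norm_nonneg _) (Real.sqrt_nonneg _)

lemma GammaMin_pow_le (s : ℂ) (r₁ r₂ : ℕ) :
    GammaMin s ^ (r₁ + 2 * r₂) ≤
      ‖GammaR (1 - s) / GammaR s‖ ^ r₁ * ‖GammaC (1 - s) / GammaC s‖ ^ r₂ := by
  have hR : GammaMin s ≤ ‖GammaR (1 - s) / GammaR s‖ := min_le_left _ _
  have hC : GammaMin s ^ 2 ≤ ‖GammaC (1 - s) / GammaC s‖ :=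
    (Real.le_sqrt (GammaMin_nonneg s) (norm_nonneg _)).mp (min_le_right _ _)
  have := GammaMin_nonneg s
  rw [pow_add, pow_mul]
  gcongr

lemma norm_mul_GammaMin_pow_mul_le_of_functional_equation (K : Type*) [Field K] [NumberField K]
    (ζK : ℂ → ℂ) (z : ℂ)
    (hfe : ζK z = ζK (1 - z) *
        (GammaR (1 - z) ^ InfinitePlace.nrRealPlaces K *
          GammaC (1 - z) ^ InfinitePlace.nrComplexPlaces K) /
        (GammaR z ^ InfinitePlace.nrRealPlaces K * GammaC z ^ InfinitePlace.nrComplexPlaces K) *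
        (Complex.ofReal |(discr K : ℝ)| ^ ((1 : ℂ) / 2 - z))) :
    ‖ζK (1 - z)‖ * GammaMin z ^ Module.finrank ℚ K * |(discr K : ℝ)| ^ ((1 : ℝ) / 2 - z.re) ≤
      ‖ζK z‖ := by
  have hΔ : 0 < |(discr K : ℝ)| := abs_pos.mpr (by exact_mod_cast discr_ne_zero K)
  have hnorm : ‖ζK z‖ = ‖ζK (1 - z)‖ *
      (‖GammaR (1 - z) / GammaR z‖ ^ InfinitePlace.nrRealPlaces K *
        ‖GammaC (1 - z) / GammaC z‖ ^ InfinitePlace.nrComplexPlaces K) *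
      |(discr K : ℝ)| ^ ((1 : ℝ) / 2 - z.re) := by
    have hre : ((1 : ℂ) / 2 - z).re = 1 / 2 - z.re := by norm_num
    rw [hfe, norm_mul, Complex.norm_cpow_eq_rpow_re_of_pos hΔ, hre]
    simp only [norm_mul, norm_div, norm_pow, div_pow]
    ring
  rw [hnorm, ← InfinitePlace.card_add_two_mul_card_eq_rank]
  gcongr
  exact GammaMin_pow_le z _ _

lemma exists_lt_one_lt_mul_rpow {a D p : ℝ} (hD : 0 < D) (h : 1 < a * D ^ p) :
    ∃ D' ∈ Set.Ioo 0 D, 1 < a * D' ^ p := by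
  have hcont : ContinuousAt (fun x : ℝ => a * x ^ p) D :=
    continuousAt_const.mul (Real.continuousAt_rpow_const _ _ (Or.inl hD.ne'))
  have hev : ∀ᶠ x in 𝓝[<] D, 0 < x ∧ 1 < a * x ^ p :=
    nhdsWithin_le_nhds ((eventually_gt_nhds hD).and (hcont.eventually (lt_mem_nhds h)))
  obtain ⟨D', ⟨hpos, hlt⟩, hD'⟩ := (hev.and self_mem_nhdsWithin).exists
  exact ⟨D', ⟨hpos, hD'⟩, hlt⟩

lemma mul_rpow_pow_le_of_le_rpow_inv {a D p Δ B : ℝ} {n : ℕ} (ha : 0 ≤ a) (hD : 0 ≤ D)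
    (hp : 0 ≤ p) (hn : n ≠ 0) (hΔ : 0 ≤ Δ) (hDΔ : D ≤ Δ ^ (n : ℝ)⁻¹) (hB : a ^ n * Δ ^ p ≤ B) :
    (a * D ^ p) ^ n ≤ B := by
  have hDn : D ^ n ≤ Δ := by
    simpa using (Real.le_rpow_inv_iff_of_pos hD hΔ (by positivity)).mp hDΔ
  calc (a * D ^ p) ^ n = a ^ n * (D ^ n) ^ p := by
        rw [mul_pow, ← Real.rpow_mul_natCast hD, mul_comm p, Real.rpow_natCast_mul hD, mul_comm]
    _ ≤ a ^ n * Δ ^ p := by gcongr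
    _ ≤ B := hB

theorem NumberFieldIn.finite_setOf_pow_finrank_mul_rpow_le
    (hmink : ∀ n : ℕ, ∀ C : ℝ,
      {F : NumberFieldIn | Module.finrank ℚ F.1 = n ∧ |(discr F.1 : ℝ)| ≤ C}.Finite)
    (hodl : ∀ ε : ℝ, 0 < ε →
      {F : NumberFieldIn |
        |(discr F.1 : ℝ)| ^ ((Module.finrank ℚ F.1 : ℝ)⁻¹) < Dm - ε}.Finite)
    {a p B : ℝ} (hp : 0 < p) (hDm : 1 < a * Dm ^ p) :
    {F : NumberFieldIn | a ^ Module.finrank ℚ F.1 * |(discr F.1 : ℝ)| ^ p ≤ B}.Finite := by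
  have ha : 0 < a := pos_of_mul_pos_left (one_pos.trans hDm) (Real.rpow_nonneg Dm_pos.le p)
  obtain ⟨D, ⟨hD, hDDm⟩, hc⟩ := exists_lt_one_lt_mul_rpow Dm_pos hDm
  obtain ⟨N, hN⟩ := pow_unbounded_of_one_lt B hc
  refine ((hodl (Dm - D) (sub_pos.mpr hDDm)).union
    ((Finset.range N).finite_toSet.biUnion fun n _ => hmink n ((B / a ^ n) ^ p⁻¹))).subset ?_
  intro F (hF : a ^ Module.finrank ℚ F.1 * |(discr F.1 : ℝ)| ^ p ≤ B)
  have hΔ : 0 ≤ |(discr F.1 : ℝ)| := abs_nonneg _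
  rw [Set.mem_union, Set.mem_ofPred_eq, sub_sub_cancel]
  by_cases hodlF : |(discr F.1 : ℝ)| ^ ((Module.finrank ℚ F.1 : ℝ)⁻¹) < D
  · exact Or.inl hodlF
  refine Or.inr (Set.mem_biUnion (x := Module.finrank ℚ F.1) ?_ ⟨rfl, ?_⟩)
  · have hcB := mul_rpow_pow_le_of_le_rpow_inv ha.le hD.le hp.le Module.finrank_pos.ne' hΔ
      (not_lt.mp hodlF) hF
    exact Finset.mem_range.mpr ((pow_lt_pow_iff_right₀ hc).mp (hcB.trans_lt hN))
  · have hpos : 0 < a ^ Module.finrank ℚ F.1 := pow_pos ha _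
    refine (Real.le_rpow_inv_iff_of_pos hΔ ?_ hp).mpr ((le_div_iff₀' hpos).mpr hF)
    exact div_nonneg ((mul_nonneg hpos.le (Real.rpow_nonneg hΔ p)).trans hF) hpos.le

/-- Northcott property to the left of the critical strip: let `s = σ + iτ` with
`σ < 0`, and let `Z F` be the (analytically continued) Dedekind zeta function of
the number field `F`, assumed to satisfy the functional equation and the lower
bound `|ζ_F(1-s)| ≥ ζ(1-σ)^{-[F:ℚ]}`.  Assume Odlyzko's discriminant bound and
the Minkowski-type finiteness of fields of bounded degree and discriminant.  If
`Γ_m(s) · D_m^{1/2-σ} / ζ(1-σ) > 1`, then for every `B > 0` the set of number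
fields `F` with `|ζ_F(s)| ≤ B` is finite. -/
theorem northcott_of_gamma_condition (σ τ : ℝ) (hσ : σ < 0)
    (Z : NumberFieldIn → ℂ → ℂ)
    (hfe : ∀ F : NumberFieldIn, ∀ z : ℂ,
      Z F z = Z F (1 - z) *
        (GammaR (1 - z) ^ (NumberField.InfinitePlace.nrRealPlaces F.1) *
          GammaC (1 - z) ^ (NumberField.InfinitePlace.nrComplexPlaces F.1)) /
        (GammaR z ^ (NumberField.InfinitePlace.nrRealPlaces F.1) *
          GammaC z ^ (NumberField.InfinitePlace.nrComplexPlaces F.1)) *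
        (Complex.ofReal |(NumberField.discr F.1 : ℝ)| ^ ((1 : ℂ) / 2 - z)))
    (hlow : ∀ F : NumberFieldIn,
      1 / riemannZetaReal (1 - σ) ^ (Module.finrank ℚ F.1) ≤
        ‖Z F (1 - (σ + τ * Complex.I))‖)
    (hmink : ∀ n : ℕ, ∀ C : ℝ,
      {F : NumberFieldIn | Module.finrank ℚ F.1 = n ∧
        |(NumberField.discr F.1 : ℝ)| ≤ C}.Finite)
    (hodl : ∀ ε : ℝ, 0 < ε →
      {F : NumberFieldIn |
        |(NumberField.discr F.1 : ℝ)| ^ ((Module.finrank ℚ F.1 : ℝ)⁻¹) < Dm - ε}.Finite)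
    (hcond : 1 < GammaMin (σ + τ * Complex.I) * Dm ^ ((1 : ℝ) / 2 - σ) /
        riemannZetaReal (1 - σ)) :
    ∀ B : ℝ, 0 < B →
      {F : NumberFieldIn |
        ‖Z F (σ + τ * Complex.I)‖ ≤ B}.Finite := by
  intro B _
  set s : ℂ := σ + τ * Complex.I
  set ζ := riemannZetaReal (1 - σ)
  have hgrowth : 1 < GammaMin s / ζ * Dm ^ ((1 : ℝ) / 2 - σ) := by rwa [div_mul_eq_mul_div]
  refine (NumberFieldIn.finite_setOf_pow_finrank_mul_rpow_le hmink hodl (B := B) (by linarith)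
    hgrowth).subset fun F (hF : ‖Z F s‖ ≤ B) => ?_
  have hs : s.re = σ := by simp [s]
  calc (GammaMin s / ζ) ^ Module.finrank ℚ F.1 * |(discr F.1 : ℝ)| ^ ((1 : ℝ) / 2 - σ)
      = 1 / ζ ^ Module.finrank ℚ F.1 * GammaMin s ^ Module.finrank ℚ F.1 *
          |(discr F.1 : ℝ)| ^ ((1 : ℝ) / 2 - σ) := by ring
    _ ≤ ‖Z F (1 - s)‖ * GammaMin s ^ Module.finrank ℚ F.1 *
          |(discr F.1 : ℝ)| ^ ((1 : ℝ) / 2 - σ) := by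
        have := GammaMin_nonneg s
        gcongr
        exact hlow F
    _ ≤ ‖Z F s‖ := hs ▸ norm_mul_GammaMin_pow_mul_le_of_functional_equation F.1 (Z F) s (hfe F s)
    _ ≤ B := hF
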